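/- If H is a normal subgroup of a ♭-regular, ♭-separated paratopological group G such that the group reflexion H♭ of H is compact, then H is compact in G♭ and the quotient paratopological group G/H is ♭-regular. -/

import Mathlib

open Topology

/-- The group reflexion topology `τ♭`: the strongest group topology on `G` weaker than `τ`. -/
def flatTop (G : Type*) [Group G] (τ : TopologicalSpace G) : TopologicalSpace G :=
  sInf {t : TopologicalSpace G | τ ≤ t ∧ @IsTopologicalGroup G t _}

/-! Functoriality of `♭` makes `H♭ → G♭` continuous, so `H` is compact in `G♭`. Quotienting a
topological group by a compact subgroup is a closed map, so the image in `G/H` of a `τ♭`-closed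
neighbourhood of `1` is closed in the quotient topology of `G♭`; that topology is a group topology
finer than the topology of `G/H`, hence finer than `(G/H)♭`. -/

def IsFlatRegular (G : Type*) [Group G] [τ : TopologicalSpace G] : Prop :=
  ∀ U ∈ 𝓝 (1 : G), ∃ V ∈ 𝓝 (1 : G), V ⊆ U ∧ IsClosed[flatTop G τ] V

section flatTop

variable {G : Type*} [Group G]

lemma le_flatTop (τ : TopologicalSpace G) : τ ≤ flatTop G τ :=
  le_sInf fun _ ht => ht.1

lemma isTopologicalGroup_flatTop (τ : TopologicalSpace G) :
    @IsTopologicalGroup G (flatTop G τ) _ :=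
  topologicalGroup_sInf fun _ ht => ht.2

lemma flatTop_le {τ t : TopologicalSpace G} (hτt : τ ≤ t) (ht : @IsTopologicalGroup G t _) :
    flatTop G τ ≤ t :=
  sInf_le ⟨hτt, ht⟩

lemma continuous_flatTop_map {K : Type*} [Group K] {τG : TopologicalSpace G}
    {τK : TopologicalSpace K} (f : G →* K) (hf : Continuous[τG, τK] f) :
    Continuous[flatTop G τG, flatTop K τK] f := by
  rw [continuous_iff_le_induced]
  refine flatTop_le ((continuous_iff_le_induced.mp hf).trans (induced_mono (le_flatTop τK))) ?_
  let _ := flatTop K τK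
  have := isTopologicalGroup_flatTop τK
  exact topologicalGroup_induced f

lemma Subgroup.isCompact_flatTop {τ : TopologicalSpace G} (H : Subgroup G)
    (hH : @CompactSpace H (flatTop H (TopologicalSpace.induced Subtype.val τ))) :
    @IsCompact G (flatTop G τ) (H : Set G) :=
  Subtype.range_coe (s := (H : Set G)) ▸ @isCompact_range _ _
    (flatTop H (TopologicalSpace.induced Subtype.val τ)) (flatTop G τ) hH _
    (continuous_flatTop_map H.subtype continuous_induced_dom)

lemma flatTop_quotient_le_coinduced (N : Subgroup G) [N.Normal] (τ : TopologicalSpace G) :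
    flatTop (G ⧸ N) (TopologicalSpace.coinduced (↑) τ) ≤
      TopologicalSpace.coinduced (↑) (flatTop G τ) := by
  refine flatTop_le (coinduced_mono (le_flatTop τ)) ?_
  let _ := flatTop G τ
  have := isTopologicalGroup_flatTop τ
  exact QuotientGroup.instIsTopologicalGroup N

lemma IsFlatRegular.quotient [τ : TopologicalSpace G] [ContinuousMul G] (hG : IsFlatRegular G)
    {N : Subgroup G} [N.Normal] (hN : @IsCompact G (flatTop G τ) (N : Set G)) :
    IsFlatRegular (G ⧸ N) := by
  intro U hU
  obtain ⟨V, hV, hVU, hVclosed⟩ :=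
    hG _ (QuotientGroup.continuous_mk.continuousAt.preimage_mem_nhds hU)
  refine ⟨(↑) '' V, QuotientGroup.isOpenMap_coe.image_mem_nhds hV, Set.image_subset_iff.2 hVU, ?_⟩
  have hclosed :
      IsClosed[TopologicalSpace.coinduced (↑) (flatTop G τ)] (((↑) : G → G ⧸ N) '' V) := by
    let _ := flatTop G τ
    have := isTopologicalGroup_flatTop τ
    exact QuotientGroup.isClosedMap_coe hN V hVclosed
  exact hclosed.mono (flatTop_quotient_le_coinduced N τ)

end flatTop

theorem stmt_13_general {G : Type*} [Group G] [τ : TopologicalSpace G] [ContinuousMul G]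
    (H : Subgroup G) [H.Normal]
    (hreg : ∀ U ∈ nhds (1 : G), ∃ V ∈ nhds (1 : G), V ⊆ U ∧ IsClosed[flatTop G τ] V)
    (hcpt : @CompactSpace H
      (flatTop H (TopologicalSpace.induced (Subtype.val : H → G) τ))) :
    @IsCompact G (flatTop G τ) (H : Set G) ∧
      ∀ U ∈ nhds (1 : G ⧸ H), ∃ V ∈ nhds (1 : G ⧸ H), V ⊆ U ∧
        IsClosed[flatTop (G ⧸ H) (inferInstance : TopologicalSpace (G ⧸ H))] V := by
  have hH := H.isCompact_flatTop hcpt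
  exact ⟨hH, IsFlatRegular.quotient hreg hH⟩

/-- If `H` is a normal subgroup of a ♭-regular, ♭-separated paratopological group `G` such
that the group reflexion `H♭` of `H` is compact, then `H` is compact in `G♭` and the quotient
paratopological group `G/H` is ♭-regular. -/
theorem stmt_13 {G : Type*} [Group G] [τ : TopologicalSpace G] [ContinuousMul G]
    (H : Subgroup G) [H.Normal]
    (hsep : @T2Space G (flatTop G τ))
    (hreg : ∀ U ∈ nhds (1 : G), ∃ V ∈ nhds (1 : G), V ⊆ U ∧ IsClosed[flatTop G τ] V)
    (hcpt : @CompactSpace H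
      (flatTop H (TopologicalSpace.induced (Subtype.val : H → G) τ))) :
    @IsCompact G (flatTop G τ) (H : Set G) ∧
      ∀ U ∈ nhds (1 : G ⧸ H), ∃ V ∈ nhds (1 : G ⧸ H), V ⊆ U ∧
        IsClosed[flatTop (G ⧸ H) (inferInstance : TopologicalSpace (G ⧸ H))] V :=
  stmt_13_general (τ := τ) H hreg hcpt
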